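/- For the linear control system ẋ = Ax + Bu on [t₀,t₁], if the pair (A,B) is controllable (i.e., the controllability matrix [B AB ... A^{n-1}B] has rank n), then the minimal L² control energy ∫_{t₀}^{t₁} ‖u(t)‖² dt needed to steer the state from x(t₀)=0 to x(t₁)=x₁ equals x₁ᵀ P⁻¹ x₁, where P = ∫_{t₀}^{t₁} e^{A(t₁-s)} B Bᵀ e^{Aᵀ(t₁-s)} ds is the controllability gramian. -/

import Mathlib

open Matrix NormedSpace

/-!
Write `Φ(s) = e^{A(t₁-s)} B`, so that `P = ∫ Φ Φᵀ` and `vᵀ P v = ∫ ‖Φ(s)ᵀ v‖²`. If `P v = 0`,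
then `Bᵀ e^{τAᵀ} v` vanishes for `τ` in an open interval; differentiating `k` times shows that
`η = e^{τAᵀ} v` is orthogonal to every column of `AᵏB`, so the Kalman rank condition gives
`η = 0`, hence `v = 0` and `P` is invertible.

For `v = P⁻¹ x₁` the control `u* = Φᵀ v` reaches `x₁` with energy `x₁ᵀ v`. Any admissible `u`
has `∫ ⟨u*, u⟩ = vᵀ ∫ Φ u = vᵀ x₁`, so integrating `‖u‖² ≥ 2 ⟨u*, u⟩ - ‖u*‖²` gives
`∫ ‖u‖² ≥ x₁ᵀ v`.
-/

open MeasureTheory Set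

section IntervalIntegral

variable {ι κ : Type*} [Fintype ι] [Fintype κ] {a b : ℝ}

theorem intervalIntegral_pi_apply {g : ℝ → ι → ℝ} (hg : Continuous g) (i : ι) :
    (∫ s in a..b, g s) i = ∫ s in a..b, g s i :=
  ((ContinuousLinearMap.proj (R := ℝ) (φ := fun _ : ι => ℝ) i).intervalIntegral_comp_comm
    (hg.intervalIntegrable a b)).symm

theorem dotProduct_intervalIntegral (c : ι → ℝ) {g : ℝ → ι → ℝ} (hg : Continuous g) :
    c ⬝ᵥ ∫ s in a..b, g s = ∫ s in a..b, c ⬝ᵥ g s :=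
  ((dotProductBilin ℝ ℝ c).toContinuousLinearMap.intervalIntegral_comp_comm
    (hg.intervalIntegrable a b)).symm

theorem intervalIntegral_mulVec_of_entrywise {F : ℝ → Matrix ι κ ℝ} (hF : Continuous F)
    {Q : Matrix ι κ ℝ} (hQ : ∀ i j, Q i j = ∫ s in a..b, F s i j) (y : κ → ℝ) :
    ∫ s in a..b, F s *ᵥ y = Q *ᵥ y := by
  funext i
  rw [intervalIntegral_pi_apply (hF.matrix_mulVec continuous_const)]
  simp only [mulVec, dotProduct, hQ, ← intervalIntegral.integral_mul_const]
  exact intervalIntegral.integral_finsetSum fun j _ =>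
    ((hF.matrix_elem i j).mul continuous_const).intervalIntegrable a b

end IntervalIntegral

theorem two_mul_dotProduct_sub_dotProduct_self_le {ι : Type*} [Fintype ι] (z w : ι → ℝ) :
    2 * (z ⬝ᵥ w) - z ⬝ᵥ z ≤ w ⬝ᵥ w := by
  have h : 0 ≤ (w - z) ⬝ᵥ (w - z) := Finset.sum_nonneg fun i _ => mul_self_nonneg _
  simp only [sub_dotProduct, dotProduct_sub, dotProduct_comm w z] at h
  linarith

section Gramian

variable {ι κ : Type*} [Fintype ι] [Fintype κ]

noncomputable def gramian (Φ : ℝ → Matrix ι κ ℝ) (a b : ℝ) : Matrix ι ι ℝ :=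
  of fun i j => ∫ s in a..b, (Φ s * (Φ s)ᵀ) i j

variable {Φ : ℝ → Matrix ι κ ℝ} {a b : ℝ}

theorem gramian_mulVec (hΦ : Continuous Φ) (v : ι → ℝ) :
    gramian Φ a b *ᵥ v = ∫ s in a..b, Φ s *ᵥ ((Φ s)ᵀ *ᵥ v) := by
  simp only [mulVec_mulVec]
  exact (intervalIntegral_mulVec_of_entrywise (hΦ.matrix_mul hΦ.matrix_transpose)
    (fun _ _ => rfl) v).symm

theorem dotProduct_gramian_mulVec (hΦ : Continuous Φ) (w v : ι → ℝ) :
    w ⬝ᵥ gramian Φ a b *ᵥ v = ∫ s in a..b, ((Φ s)ᵀ *ᵥ w) ⬝ᵥ ((Φ s)ᵀ *ᵥ v) := by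
  rw [gramian_mulVec hΦ, dotProduct_intervalIntegral _ (by fun_prop)]
  simp only [dotProduct_mulVec, mulVec_transpose]

theorem transpose_mulVec_eq_zero_of_gramian_mulVec_eq_zero (hab : a < b) (hΦ : Continuous Φ)
    {v : ι → ℝ} (hv : gramian Φ a b *ᵥ v = 0) : ∀ s ∈ Ioc a b, (Φ s)ᵀ *ᵥ v = 0 := by
  have hcont : Continuous fun s => ((Φ s)ᵀ *ᵥ v) ⬝ᵥ ((Φ s)ᵀ *ᵥ v) := by fun_prop
  have hzero : ∫ s in a..b, ((Φ s)ᵀ *ᵥ v) ⬝ᵥ ((Φ s)ᵀ *ᵥ v) = 0 := by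
    rw [← dotProduct_gramian_mulVec hΦ, hv, dotProduct_zero]
  rw [intervalIntegral.integral_eq_zero_iff_of_le_of_nonneg_ae hab.le
    (Filter.Eventually.of_forall fun s => ?_) (hcont.intervalIntegrable a b)] at hzero
  · exact fun s hs => dotProduct_self_eq_zero.1 <|
      Measure.eqOn_Ioc_of_ae_eq volume hzero hcont.continuousOn continuousOn_const hs
  · exact Finset.sum_nonneg fun i _ => mul_self_nonneg _

theorem isLeast_energy_of_gramian_mulVec_eq (hab : a ≤ b) (hΦ : Continuous Φ) {x v : ι → ℝ}
    (hv : gramian Φ a b *ᵥ v = x) :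
    IsLeast {E : ℝ | ∃ u : ℝ → κ → ℝ, Continuous u ∧
        x = ∫ s in a..b, Φ s *ᵥ u s ∧ E = ∫ s in a..b, ∑ i, (u s i) ^ 2} (x ⬝ᵥ v) := by
  have hsq : ∀ w : κ → ℝ, ∑ i, w i ^ 2 = w ⬝ᵥ w := fun w => by simp only [dotProduct, sq]
  have hopt : ∫ s in a..b, ((Φ s)ᵀ *ᵥ v) ⬝ᵥ ((Φ s)ᵀ *ᵥ v) = x ⬝ᵥ v := by
    rw [← dotProduct_gramian_mulVec hΦ, hv, dotProduct_comm]
  refine ⟨⟨fun s => (Φ s)ᵀ *ᵥ v, by fun_prop, by rw [← hv, gramian_mulVec hΦ], ?_⟩, ?_⟩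
  · simp only [hsq, hopt]
  rintro _ ⟨u, hu, hx, rfl⟩
  have hcross : ∫ s in a..b, ((Φ s)ᵀ *ᵥ v) ⬝ᵥ u s = x ⬝ᵥ v := by
    rw [dotProduct_comm, hx, dotProduct_intervalIntegral _ (by fun_prop)]
    simp only [mulVec_transpose, dotProduct_mulVec, dotProduct_comm]
  calc x ⬝ᵥ v
      = ∫ s in a..b, 2 * (((Φ s)ᵀ *ᵥ v) ⬝ᵥ u s) - ((Φ s)ᵀ *ᵥ v) ⬝ᵥ ((Φ s)ᵀ *ᵥ v) := by
        rw [intervalIntegral.integral_sub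
          (Continuous.intervalIntegrable (by fun_prop) a b)
          (Continuous.intervalIntegrable (by fun_prop) a b),
          intervalIntegral.integral_const_mul, hcross, hopt]
        ring
    _ ≤ ∫ s in a..b, ∑ i, u s i ^ 2 := by
        refine intervalIntegral.integral_mono_on hab
          (Continuous.intervalIntegrable (by fun_prop) a b)
          (Continuous.intervalIntegrable (by fun_prop) a b) fun s _ => ?_
        rw [hsq]
        exact two_mul_dotProduct_sub_dotProduct_self_le _ _

end Gramian

section ExpDerivative

variable {𝔸 F : Type*} [NormedRing 𝔸] [NormedAlgebra ℝ 𝔸] [CompleteSpace 𝔸]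
  [NormedAddCommGroup F] [NormedSpace ℝ F] {U : Set ℝ}

theorem apply_mul_exp_smul_eq_zero (L : 𝔸 →L[ℝ] F) (x : 𝔸) (hU : IsOpen U)
    (h : ∀ t ∈ U, L (exp (t • x)) = 0) : ∀ t ∈ U, L (x * exp (t • x)) = 0 := by
  intro t ht
  have hderiv : HasDerivAt (fun t : ℝ => L (exp (t • x))) (L (x * exp (t • x))) t :=
    L.hasFDerivAt.comp_hasDerivAt t (hasDerivAt_exp_smul_const' x t)
  refine hderiv.unique ((hasDerivAt_const t 0).congr_of_eventuallyEq ?_)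
  filter_upwards [hU.mem_nhds ht] with s hs using h s hs

theorem apply_pow_mul_exp_smul_eq_zero (L : 𝔸 →L[ℝ] F) (x : 𝔸) (hU : IsOpen U)
    (h : ∀ t ∈ U, L (exp (t • x)) = 0) (k : ℕ) : ∀ t ∈ U, L (x ^ k * exp (t • x)) = 0 := by
  induction k with
  | zero => simpa only [pow_zero, one_mul] using h
  | succ k ih =>
    simpa only [ContinuousLinearMap.comp_apply, ContinuousLinearMap.mul_apply', pow_succ,
      mul_assoc] using apply_mul_exp_smul_eq_zero (L.comp (.mul ℝ 𝔸 (x ^ k))) x hU ih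

end ExpDerivative

theorem eq_zero_of_vecMul_eq_zero_of_rank_eq_card {K ι κ : Type*} [Field K] [Fintype ι]
    [Fintype κ] {C : Matrix ι κ K} (hC : C.rank = Fintype.card ι) {η : ι → K}
    (hη : η ᵥ* C = 0) : η = 0 := by
  classical
  have hsurj : Function.Surjective C.mulVecLin := by
    rw [← LinearMap.range_eq_top]
    exact Submodule.eq_top_of_finrank_eq (by rw [Module.finrank_fintype_fun_eq_card]; exact hC)
  funext i
  obtain ⟨z, hz⟩ := hsurj (Pi.single i 1)
  have h := congrArg (η ⬝ᵥ ·) hz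
  simpa [dotProduct_mulVec, hη] using h.symm

open scoped Matrix.Norms.Operator in
theorem continuous_exp_sub_smul_mul {n : ℕ} {κ : Type*} (A : Matrix (Fin n) (Fin n) ℝ)
    (B : Matrix (Fin n) κ ℝ) (b : ℝ) : Continuous fun s : ℝ => exp ((b - s) • A) * B := by
  fun_prop

section Controllability

variable {n : ℕ} {κ : Type*} [Fintype κ]

def controllabilityMatrix (A : Matrix (Fin n) (Fin n) ℝ) (B : Matrix (Fin n) κ ℝ) :
    Matrix (Fin n) (Fin n × κ) ℝ :=
  of fun i jk => (A ^ (jk.1 : ℕ) * B) i jk.2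

open scoped Matrix.Norms.Operator in
theorem eq_zero_of_transpose_mulVec_exp_smul_eq_zero {A : Matrix (Fin n) (Fin n) ℝ}
    {B : Matrix (Fin n) κ ℝ} (hAB : (controllabilityMatrix A B).rank = n) {U : Set ℝ}
    (hU : IsOpen U) {τ : ℝ} (hτ : τ ∈ U) {ξ : Fin n → ℝ}
    (h : ∀ t ∈ U, Bᵀ *ᵥ (exp (t • Aᵀ) *ᵥ ξ) = 0) : ξ = 0 := by
  let L : Matrix (Fin n) (Fin n) ℝ →L[ℝ] κ → ℝ :=
    LinearMap.toContinuousLinearMap ((mulVecBilin ℝ ℝ Bᵀ).comp ((mulVecBilin ℝ ℝ).flip ξ))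
  set η := exp (τ • Aᵀ) *ᵥ ξ
  have hpow : ∀ k : ℕ, η ᵥ* (A ^ k * B) = 0 := fun k => by
    have := apply_pow_mul_exp_smul_eq_zero L Aᵀ hU h k τ hτ
    change Bᵀ *ᵥ ((Aᵀ ^ k * exp (τ • Aᵀ)) *ᵥ ξ) = 0 at this
    rwa [← mulVec_mulVec, mulVec_mulVec, ← transpose_pow, ← transpose_mul,
      mulVec_transpose] at this
  have hη : η = 0 := by
    refine eq_zero_of_vecMul_eq_zero_of_rank_eq_card (C := controllabilityMatrix A B)
      (by rw [hAB, Fintype.card_fin]) ?_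
    funext jk
    exact congrFun (hpow jk.1) jk.2
  have hinj := mulVec_injective_iff_isUnit.2 (Matrix.isUnit_exp (τ • Aᵀ))
  exact hinj (by rw [mulVec_zero]; exact hη)

theorem isUnit_gramian_exp_smul_mul {A : Matrix (Fin n) (Fin n) ℝ} {B : Matrix (Fin n) κ ℝ}
    (hAB : (controllabilityMatrix A B).rank = n) {a b : ℝ} (hab : a < b) :
    IsUnit (gramian (fun s => exp ((b - s) • A) * B) a b) := by
  rw [← mulVec_injective_iff_isUnit]
  suffices h : ∀ ξ, gramian (fun s => exp ((b - s) • A) * B) a b *ᵥ ξ = 0 → ξ = 0 from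
    fun x y hxy => sub_eq_zero.1 (h _ (by rw [mulVec_sub, hxy, sub_self]))
  intro ξ hξ
  have hvanish := transpose_mulVec_eq_zero_of_gramian_mulVec_eq_zero hab
    (continuous_exp_sub_smul_mul A B b) hξ
  refine eq_zero_of_transpose_mulVec_exp_smul_eq_zero hAB (isOpen_Ioo (a := 0) (b := b - a))
    (τ := (b - a) / 2) ⟨by linarith, by linarith⟩ fun t ht => ?_
  have := hvanish (b - t) ⟨by linarith [ht.2], by linarith [ht.1]⟩
  rwa [sub_sub_cancel, transpose_mul, ← exp_transpose, transpose_smul, ← mulVec_mulVec] at this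

end Controllability

/-- If `(A,B)` is controllable, the minimal L² control energy steering `ẋ = Ax + Bu`
from `x(t₀) = 0` to `x(t₁) = x₁` equals `x₁ᵀ P⁻¹ x₁`, where
`P = ∫_{t₀}^{t₁} e^{A(t₁-s)} B Bᵀ e^{Aᵀ(t₁-s)} ds` is the controllability gramian.
Reaching `x₁` is expressed by the variation-of-constants formula. -/
theorem stmt7 {n m : ℕ} (A : Matrix (Fin n) (Fin n) ℝ) (B : Matrix (Fin n) (Fin m) ℝ)
    (t₀ t₁ : ℝ) (ht : t₀ < t₁)
    (hctrb : (Matrix.of fun (i : Fin n) (jk : Fin n × Fin m) =>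
      (A ^ (jk.1 : ℕ) * B) i jk.2).rank = n)
    (P : Matrix (Fin n) (Fin n) ℝ)
    (hP : ∀ i j, P i j = ∫ s in t₀..t₁,
      (NormedSpace.exp ((t₁ - s) • A) * B * Bᵀ * (NormedSpace.exp ((t₁ - s) • A))ᵀ) i j)
    (x₁ : Fin n → ℝ) :
    IsLeast {E : ℝ | ∃ u : ℝ → Fin m → ℝ, Continuous u ∧
        (x₁ = ∫ s in t₀..t₁, (NormedSpace.exp ((t₁ - s) • A)).mulVec (B.mulVec (u s))) ∧
        E = ∫ s in t₀..t₁, ∑ i, (u s i) ^ 2}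
      (x₁ ⬝ᵥ P⁻¹.mulVec x₁) := by
  set G := gramian (fun s => exp ((t₁ - s) • A) * B) t₀ t₁
  have hP_eq : P = G := by
    ext i j
    simp only [hP, G, gramian, of_apply, transpose_mul, Matrix.mul_assoc]
  have hP_unit : IsUnit P.det :=
    (isUnit_iff_isUnit_det P).1 (hP_eq ▸ isUnit_gramian_exp_smul_mul hctrb ht)
  have hreach : G *ᵥ (P⁻¹ *ᵥ x₁) = x₁ := by
    rw [← hP_eq, mulVec_mulVec, mul_nonsing_inv P hP_unit, one_mulVec]
  simpa only [← mulVec_mulVec] using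
    isLeast_energy_of_gramian_mulVec_eq ht.le (continuous_exp_sub_smul_mul A B t₁) hreach
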